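/- Let G be a connected graph with at least one edge and maximum degree Δ ≥ 2. Then the largest real zero γ(G) of the adjoint polynomial satisfies γ(G) ≤ 4(Δ − 1). -/

import Mathlib

open Polynomial

/-- A clique cover of `G`: a partition of the vertex set into parts each inducing a clique. -/
def SimpleGraph.IsCliqueCover {V : Type*} [Fintype V] [DecidableEq V] (G : SimpleGraph V)
    (P : Finpartition (Finset.univ : Finset V)) : Prop :=
  ∀ p ∈ P.parts, G.IsClique (p : Set V)

/-- `a_k(G)`: the number of clique covers of `G` with exactly `k` parts. -/
noncomputable def numCliqueCovers {V : Type*} [Fintype V] [DecidableEq V] (G : SimpleGraph V)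
    (k : ℕ) : ℕ :=
  {P : Finpartition (Finset.univ : Finset V) | G.IsCliqueCover P ∧ P.parts.card = k}.ncard

/-- A finset of vertices is independent: pairwise non-adjacent. -/
def SimpleGraph.IsIndepFinset {W : Type*} (H : SimpleGraph W) (s : Finset W) : Prop :=
  ∀ v ∈ s, ∀ w ∈ s, ¬ H.Adj v w

/-- `i_k(H)`: the number of independent sets of size `k` in `H`. -/
noncomputable def numIndepSets {W : Type*} (H : SimpleGraph W) (k : ℕ) : ℕ :=
  {s : Finset W | H.IsIndepFinset s ∧ s.card = k}.ncard

/-- The auxiliary one-sided relation in the construction of `Ĝ`: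
for edges `e = (u_i,u_j)`, `f = (u_k,u_l)` with `j ≤ l`, they are related iff
`i = k`, or `j = k`, or (`j = l` and `u_i, u_k` non-adjacent). -/
def hatRel {n : ℕ} (G : SimpleGraph (Fin n)) (e f : Fin n × Fin n) : Prop :=
  e.2 ≤ f.2 ∧ (e.1 = f.1 ∨ e.2 = f.1 ∨ (e.2 = f.2 ∧ ¬ G.Adj e.1 f.1))

/-- The graph `Ĝ` associated to `G` with its vertex ordering: vertices are the
edges `(u_i,u_j)` with `i < j`. -/
def hatGraph {n : ℕ} (G : SimpleGraph (Fin n)) :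
    SimpleGraph {p : Fin n × Fin n // p.1 < p.2 ∧ G.Adj p.1 p.2} where
  Adj e f := e ≠ f ∧ (hatRel G e.1 f.1 ∨ hatRel G f.1 e.1)
  symm := ⟨fun e f h => ⟨h.1.symm, h.2.symm⟩⟩
  loopless := ⟨fun e h => h.1 rfl⟩

/-- The independence polynomial `I(H,x) = Σ_k (-1)^k i_k(H) x^k` (over `ℝ`). -/
noncomputable def indepPoly {W : Type*} [Fintype W] (H : SimpleGraph W) : Polynomial ℝ :=
  ∑ k ∈ Finset.range (Fintype.card W + 1), C ((-1 : ℝ) ^ k * (numIndepSets H k : ℝ)) * X ^ k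

/-- The adjoint polynomial `h(G,x) = Σ_k (-1)^{n-k} a_k(G) x^k` (over `ℝ`). -/
noncomputable def adjPoly {V : Type*} [Fintype V] [DecidableEq V] (G : SimpleGraph V) :
    Polynomial ℝ :=
  ∑ k ∈ Finset.range (Fintype.card V + 1),
    C ((-1 : ℝ) ^ (Fintype.card V - k) * (numCliqueCovers G k : ℝ)) * X ^ k

/-- `h*(G,x) = x^n h(G,1/x) = Σ_k (-1)^k a_{n-k}(G) x^k` (over `ℝ`). -/
noncomputable def hStarPoly {V : Type*} [Fintype V] [DecidableEq V] (G : SimpleGraph V) :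
    Polynomial ℝ :=
  ∑ k ∈ Finset.range (Fintype.card V + 1),
    C ((-1 : ℝ) ^ k * (numCliqueCovers G (Fintype.card V - k) : ℝ)) * X ^ k

/-- Integer version of the independence polynomial. -/
noncomputable def indepPolyZ {W : Type*} [Fintype W] (H : SimpleGraph W) : Polynomial ℤ :=
  ∑ k ∈ Finset.range (Fintype.card W + 1), C ((-1 : ℤ) ^ k * (numIndepSets H k : ℤ)) * X ^ k

/-- Integer version of `h*`. -/
noncomputable def hStarPolyZ {V : Type*} [Fintype V] [DecidableEq V] (G : SimpleGraph V) :
    Polynomial ℤ :=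
  ∑ k ∈ Finset.range (Fintype.card V + 1),
    C ((-1 : ℤ) ^ k * (numCliqueCovers G (Fintype.card V - k) : ℤ)) * X ^ k

/-- A finset of edges forming a matching in `G`. -/
def SimpleGraph.IsMatchingFinset {V : Type*} (G : SimpleGraph V) (s : Finset (Sym2 V)) : Prop :=
  (↑s : Set (Sym2 V)) ⊆ G.edgeSet ∧
    ∀ e ∈ s, ∀ f ∈ s, e ≠ f → ∀ v, ¬(v ∈ e ∧ v ∈ f)

/-- `m_k(G)`: number of matchings of size `k`. -/
noncomputable def numMatchings {V : Type*} (G : SimpleGraph V) (k : ℕ) : ℕ :=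
  {s : Finset (Sym2 V) | G.IsMatchingFinset s ∧ s.card = k}.ncard

/-- The matching polynomial `M(G,x) = Σ_k (-1)^k m_k(G) x^{n-k}` (over `ℝ`). -/
noncomputable def matchPoly {V : Type*} [Fintype V] (G : SimpleGraph V) : Polynomial ℝ :=
  ∑ k ∈ Finset.range (Fintype.card V + 1),
    C ((-1 : ℝ) ^ k * (numMatchings G k : ℝ)) * X ^ (Fintype.card V - k)

/-- The line graph `L(G)`: vertices are the edges of `G`, adjacent iff distinct and
sharing an endpoint. -/
def lineGraph' {V : Type*} (G : SimpleGraph V) : SimpleGraph G.edgeSet where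
  Adj e f := e ≠ f ∧ ∃ v, v ∈ (e : Sym2 V) ∧ v ∈ (f : Sym2 V)
  symm := ⟨fun e f h => ⟨h.1.symm, h.2.choose, h.2.choose_spec.2, h.2.choose_spec.1⟩⟩
  loopless := ⟨fun e h => h.1 rfl⟩

/-- `H ∪ K₁`: the disjoint union of `H` with one isolated vertex. -/
def addIsolated {V : Type*} (H : SimpleGraph V) : SimpleGraph (V ⊕ Unit) where
  Adj x y := ∃ a b, x = Sum.inl a ∧ y = Sum.inl b ∧ H.Adj a b
  symm := ⟨by rintro x y ⟨a, b, rfl, rfl, h⟩; exact ⟨b, a, rfl, rfl, h.symm⟩⟩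
  loopless := ⟨by rintro x ⟨a, b, rfl, h, hadj⟩; cases Sum.inl_injective h; exact hadj.ne rfl⟩

/-- `b` is the smallest zero of `p` in `(0,1]`. -/
def IsBetaZero (p : Polynomial ℝ) (b : ℝ) : Prop :=
  b ∈ Set.Ioc (0 : ℝ) 1 ∧ p.eval b = 0 ∧ ∀ y ∈ Set.Ioc (0 : ℝ) 1, p.eval y = 0 → b ≤ y

/-- `g` is the largest real zero of `p`. -/
def IsGammaZero (p : Polynomial ℝ) (g : ℝ) : Prop :=
  p.eval g = 0 ∧ ∀ y : ℝ, p.eval y = 0 → y ≤ g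

/-!
Fix `x > 4(Δ - 1)` and write `φ(A)` for the adjoint polynomial of the induced subgraph `G[A]`
evaluated at `x`. Classifying clique partitions of `A` by the part containing a vertex `v` gives
`φ(A) = x · Σ_S (-1)^|S| φ(A - v - S)`, the sum running over the cliques `S` in the neighbourhood
`N` of `v` in `A`. Peeling the vertices `u ∈ N` off this sum one at a time shows that it is at
least `(1 - 2|N|/x) φ(A - v)`, as long as `φ(A' - u) ≤ (2/x) φ(A')` for the vertex sets `A'`
involved; there `u` has at most `Δ - 1` neighbours, because its neighbour `v` has been removed.
So by induction on `A`, `φ(A) > 0`, and `φ(A - v) ≤ (2/x) φ(A)` whenever `v` has at most `Δ - 1`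
neighbours in `A`. In particular `h(G, x) = φ(V) > 0` beyond `4(Δ - 1)`.
-/

open Finset

namespace Finpartition

variable {α : Type*} [GeneralizedBooleanAlgebra α] [DecidableEq α] {a b : α}

theorem parts_avoid_of_mem (P : Finpartition a) (hb : b ∈ P.parts) :
    (P.avoid b).parts = P.parts.erase b := by
  ext c
  rw [mem_avoid, mem_erase]
  constructor
  · rintro ⟨d, hd, hdb, rfl⟩
    have hne : d ≠ b := by rintro rfl; exact hdb le_rfl
    have hdisj : Disjoint d b := P.disjoint hd hb hne
    rw [hdisj.sdiff_eq_left]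
    exact ⟨hne, hd⟩
  · rintro ⟨hcb, hc⟩
    have hdisj : Disjoint c b := P.disjoint hc hb hcb
    exact ⟨c, hc, fun hle => P.ne_bot hc (hdisj.eq_bot_of_le hle), hdisj.sdiff_eq_left⟩

end Finpartition

namespace SimpleGraph

variable {V : Type*} [DecidableEq V] (G : SimpleGraph V) [DecidableRel G.Adj]

def IsCliquePartition {A : Finset V} (P : Finpartition A) : Prop :=
  ∀ p ∈ P.parts, G.IsClique (p : Set V)

instance {A : Finset V} (P : Finpartition A) : Decidable (G.IsCliquePartition P) :=
  inferInstanceAs (Decidable (∀ p ∈ P.parts, G.IsClique (p : Set V)))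

def cliquesWithin (W : Finset V) : Finset (Finset V) :=
  {S ∈ W.powerset | G.IsClique (S : Set V)}

/-- `h(G[A], x)`, the adjoint polynomial of the induced subgraph on `A` evaluated at `x`. -/
noncomputable def adjEvalOn (A : Finset V) (x : ℝ) : ℝ :=
  ∑ P : Finpartition A with G.IsCliquePartition P, (-1) ^ (#A + #P.parts) * x ^ #P.parts

noncomputable def cliqueDeletionSum (B W : Finset V) (x : ℝ) : ℝ :=
  ∑ S ∈ G.cliquesWithin W, (-1) ^ #S * G.adjEvalOn (B \ S) x

variable {G}

theorem mem_cliquesWithin {W S : Finset V} :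
    S ∈ G.cliquesWithin W ↔ S ⊆ W ∧ G.IsClique (S : Set V) := by
  simp [cliquesWithin]

variable (G)

theorem sum_cliquePartitions_part_eq {M : Type*} [AddCommMonoid M] (f : ℕ → M)
    {A B : Finset V} {v : V} (hvB : v ∈ B) (hBA : B ⊆ A) (hB : G.IsClique (B : Set V)) :
    ∑ P : Finpartition A with G.IsCliquePartition P ∧ P.part v = B, f #P.parts =
      ∑ Q : Finpartition (A \ B) with G.IsCliquePartition Q, f (#Q.parts + 1) := by
  have hBne : B ≠ ⊥ := ne_empty_of_mem hvB
  have hsup : (A \ B) ⊔ B = A := sdiff_union_of_subset hBA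
  have hB_mem {P : Finpartition A} (hP : P.part v = B) : B ∈ P.parts :=
    hP ▸ P.part_mem.2 (hBA hvB)
  have hB_not_mem (Q : Finpartition (A \ B)) : B ∉ Q.parts := fun h =>
    (mem_sdiff.1 (Q.le h hvB)).2 hvB
  refine sum_nbij' (fun P => P.avoid B) (fun Q => Q.extend hBne sdiff_disjoint hsup)
    ?_ ?_ ?_ ?_ ?_ <;> simp only [mem_filter, mem_univ, true_and]
  · rintro P ⟨hP, hPv⟩ p hp
    rw [P.parts_avoid_of_mem (hB_mem hPv)] at hp
    exact hP p (mem_of_mem_erase hp)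
  · intro Q hQ
    refine ⟨fun p hp => ?_, Finpartition.part_eq_of_mem _ (mem_insert_self B _) hvB⟩
    obtain rfl | hp := mem_insert.1 hp
    exacts [hB, hQ p hp]
  · rintro P ⟨-, hPv⟩
    ext1
    simp only [Finpartition.extend_parts, P.parts_avoid_of_mem (hB_mem hPv),
      insert_erase (hB_mem hPv)]
  · rintro Q -
    ext1
    rw [Finpartition.parts_avoid_of_mem _ (mem_insert_self B _), Finpartition.extend_parts,
      erase_insert (hB_not_mem Q)]
  · rintro P ⟨-, hPv⟩
    rw [P.parts_avoid_of_mem (hB_mem hPv), card_erase_add_one (hB_mem hPv)]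

theorem adjEvalOn_empty (x : ℝ) : G.adjEvalOn ∅ x = 1 := by
  rw [adjEvalOn, ← bot_eq_empty, univ_unique, Finpartition.default_eq_empty, sum_filter,
    sum_singleton, if_pos (by simp [IsCliquePartition])]
  simp

theorem cliqueDeletionSum_empty (B : Finset V) (x : ℝ) :
    G.cliqueDeletionSum B ∅ x = G.adjEvalOn B x := by
  rw [cliqueDeletionSum, cliquesWithin, powerset_empty, sum_filter, sum_singleton,
    if_pos (by simp)]
  simp

variable [Fintype V]

theorem sum_cliquePartitions_eq_sum_cliquesWithin {M : Type*} [AddCommMonoid M] (f : ℕ → M)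
    {A : Finset V} {v : V} (hv : v ∈ A) :
    ∑ P : Finpartition A with G.IsCliquePartition P, f #P.parts =
      ∑ S ∈ G.cliquesWithin (G.neighborFinset v ∩ A),
        ∑ Q : Finpartition (A.erase v \ S) with G.IsCliquePartition Q, f (#Q.parts + 1) := by
  have hmaps : ∀ P ∈ ({P : Finpartition A | G.IsCliquePartition P} : Finset _),
      (P.part v).erase v ∈ G.cliquesWithin (G.neighborFinset v ∩ A) := by
    intro P hP
    have hpart := P.part_mem.2 hv
    have hclique := (mem_filter.1 hP).2 _ hpart
    refine mem_cliquesWithin.2 ⟨fun u hu => ?_, hclique.subset (erase_subset v _)⟩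
    obtain ⟨huv, hu⟩ := mem_erase.1 hu
    exact mem_inter.2
      ⟨(G.mem_neighborFinset v u).2 (hclique (P.mem_part hv) hu huv.symm), P.le hpart hu⟩
  rw [← sum_fiberwise_of_maps_to hmaps]
  refine sum_congr rfl fun S hS => ?_
  obtain ⟨hSN, hS⟩ := mem_cliquesWithin.1 hS
  have hSN' : S ⊆ G.neighborFinset v := hSN.trans inter_subset_left
  have hvS : v ∉ S := fun h => G.notMem_neighborFinset_self v (hSN' h)
  have hclique : G.IsClique ((insert v S : Finset V) : Set V) := by
    rw [coe_insert]
    exact hS.insert fun b hb _ => (G.mem_neighborFinset v b).1 (hSN' hb)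
  have hsdiff : A.erase v \ S = A \ insert v S := by rw [sdiff_insert, erase_sdiff_comm]
  rw [filter_filter, hsdiff, ← sum_cliquePartitions_part_eq G f (mem_insert_self v S)
    (insert_subset hv (hSN.trans inter_subset_right)) hclique]
  refine sum_congr (filter_congr fun P _ => and_congr_right fun _ => ?_) fun _ _ => rfl
  constructor
  · rintro rfl
    exact (insert_erase (P.mem_part hv)).symm
  · intro h
    rw [h, erase_insert hvS]

theorem sum_cliquesWithin_of_mem {M : Type*} [AddCommMonoid M] (f : Finset V → M)
    {W : Finset V} {u : V} (hu : u ∈ W) :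
    ∑ S ∈ G.cliquesWithin W, f S = ∑ S ∈ G.cliquesWithin (W.erase u), f S +
      ∑ S ∈ G.cliquesWithin (W.erase u ∩ G.neighborFinset u), f (insert u S) := by
  rw [← sum_filter_not_add_sum_filter _ (u ∈ ·)]
  congr 1
  · refine sum_congr (ext fun S => ?_) fun _ _ => rfl
    simp only [mem_filter, mem_cliquesWithin, subset_erase]
    tauto
  · refine sum_nbij' (erase · u) (insert u) ?_ ?_ ?_ ?_ ?_
    · intro S hS
      obtain ⟨hS, huS⟩ := mem_filter.1 hS
      obtain ⟨hSW, hS⟩ := mem_cliquesWithin.1 hS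
      refine mem_cliquesWithin.2 ⟨subset_inter (erase_subset_erase u hSW) fun w hw => ?_,
        hS.subset (erase_subset u S)⟩
      obtain ⟨hwu, hw⟩ := mem_erase.1 hw
      exact (G.mem_neighborFinset u w).2 (hS huS hw hwu.symm)
    · intro S hS
      obtain ⟨hSW, hS⟩ := mem_cliquesWithin.1 hS
      refine mem_filter.2 ⟨mem_cliquesWithin.2 ⟨insert_subset hu ?_, ?_⟩, mem_insert_self u S⟩
      · exact (hSW.trans inter_subset_left).trans (erase_subset u W)
      · rw [coe_insert]
        exact hS.insert fun b hb _ =>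
          (G.mem_neighborFinset u b).1 (inter_subset_right (hSW hb))
    · intro S hS
      exact insert_erase (mem_filter.1 hS).2
    · intro S hS
      exact erase_insert fun h =>
        notMem_erase u W (((mem_cliquesWithin.1 hS).1.trans inter_subset_left) h)
    · intro S hS
      rw [insert_erase (mem_filter.1 hS).2]

theorem adjEvalOn_eq_mul_cliqueDeletionSum {A : Finset V} {v : V} (hv : v ∈ A) (x : ℝ) :
    G.adjEvalOn A x = x * G.cliqueDeletionSum (A.erase v) (G.neighborFinset v ∩ A) x := by
  rw [adjEvalOn, sum_cliquePartitions_eq_sum_cliquesWithin G (fun k => (-1) ^ (#A + k) * x ^ k) hv,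
    cliqueDeletionSum, mul_sum]
  refine sum_congr rfl fun S hS => ?_
  have hSN : S ⊆ G.neighborFinset v ∩ A := (mem_cliquesWithin.1 hS).1
  have hvS : v ∉ S := fun h => G.notMem_neighborFinset_self v (inter_subset_left (hSN h))
  have hcard : #A = #(A.erase v \ S) + #S + 1 := by
    rw [card_sdiff_add_card_eq_card (subset_erase.2 ⟨hSN.trans inter_subset_right, hvS⟩),
      card_erase_add_one hv]
  rw [adjEvalOn, mul_sum, mul_sum]
  refine sum_congr rfl fun Q _ => ?_
  rw [hcard]
  ring

theorem cliqueDeletionSum_eq_sub {B W : Finset V} {u : V} (hu : u ∈ W) (x : ℝ) :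
    G.cliqueDeletionSum B W x = G.cliqueDeletionSum B (W.erase u) x -
      G.cliqueDeletionSum (B.erase u) (W.erase u ∩ G.neighborFinset u) x := by
  rw [cliqueDeletionSum, sum_cliquesWithin_of_mem G _ hu, sub_eq_add_neg, cliqueDeletionSum,
    cliqueDeletionSum, ← sum_neg_distrib]
  congr 1
  refine sum_congr rfl fun S hS => ?_
  have huS : u ∉ S := fun h =>
    notMem_erase u W (((mem_cliquesWithin.1 hS).1.trans inter_subset_left) h)
  rw [card_insert_of_notMem huS, sdiff_insert, ← erase_sdiff_comm, pow_succ]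
  ring

theorem cliqueDeletionSum_bounds {x r : ℝ} (W B : Finset V) (hWr : #W * r ≤ 1)
    (hyp : ∀ T ⊆ W, 0 ≤ G.adjEvalOn (B \ T) x ∧
      ∀ u ∈ W \ T, G.adjEvalOn ((B \ T).erase u) x ≤ r * G.adjEvalOn (B \ T) x) :
    (1 - #W * r) * G.adjEvalOn B x ≤ G.cliqueDeletionSum B W x ∧
      G.cliqueDeletionSum B W x ≤ G.adjEvalOn B x := by
  induction W using Finset.strongInduction generalizing B with | H W ih => ?_
  obtain rfl | ⟨u, hu⟩ := W.eq_empty_or_nonempty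
  · simp [cliqueDeletionSum_empty]
  set W₁ := W.erase u
  set W₂ := W₁ ∩ G.neighborFinset u
  have hcard : (#W : ℝ) = #W₁ + 1 := by exact_mod_cast (card_erase_add_one hu).symm
  have hW₂W₁ : (#W₂ : ℝ) ≤ #W₁ := by exact_mod_cast card_le_card inter_subset_left
  have hW₁r : #W₁ * r ≤ 1 := by nlinarith
  have hW₂r : #W₂ * r ≤ 1 := by nlinarith
  have hB : 0 ≤ G.adjEvalOn B x := by simpa using (hyp ∅ (empty_subset W)).1
  have hBu : G.adjEvalOn (B.erase u) x ≤ r * G.adjEvalOn B x := by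
    simpa using (hyp ∅ (empty_subset W)).2 u (by simpa)
  have hBu₀ : 0 ≤ G.adjEvalOn (B.erase u) x := by
    simpa [sdiff_singleton_eq_erase] using (hyp {u} (singleton_subset_iff.2 hu)).1
  have h₁ := ih W₁ (erase_ssubset hu) B hW₁r fun T hT => by
    refine ⟨(hyp T (hT.trans (erase_subset u W))).1, fun u' hu' => ?_⟩
    obtain ⟨hu'W, hu'T⟩ := mem_sdiff.1 hu'
    exact (hyp T (hT.trans (erase_subset u W))).2 u' (mem_sdiff.2 ⟨mem_of_mem_erase hu'W, hu'T⟩)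
  have h₂ := ih W₂ (inter_subset_left.trans_ssubset (erase_ssubset hu)) (B.erase u) hW₂r
    fun T hT => by
    have hTu : insert u T ⊆ W := insert_subset hu ((hT.trans inter_subset_left).trans
      (erase_subset u W))
    have hBT : B.erase u \ T = B \ insert u T := by rw [sdiff_insert, erase_sdiff_comm]
    refine ⟨hBT ▸ (hyp _ hTu).1, fun u' hu' => ?_⟩
    obtain ⟨hu'W, hu'T⟩ := mem_sdiff.1 hu'
    obtain ⟨hu'u, hu'W⟩ := mem_erase.1 (inter_subset_left hu'W)
    rw [hBT]
    exact (hyp _ hTu).2 u' (mem_sdiff.2 ⟨hu'W, by simp [hu'u, hu'T]⟩)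
  have hpos₂ : 0 ≤ G.cliqueDeletionSum (B.erase u) W₂ x :=
    (mul_nonneg (by linarith) hBu₀).trans h₂.1
  rw [cliqueDeletionSum_eq_sub G hu, hcard]
  constructor
  · nlinarith [h₁.1, h₂.2]
  · linarith [h₁.2]

theorem card_neighborFinset_inter_le_degree_sub_one {u v : V} {B : Finset V} (h : G.Adj u v)
    (hv : v ∉ B) : #(G.neighborFinset u ∩ B) ≤ G.degree u - 1 := by
  rw [← card_neighborFinset_eq_degree, ← card_erase_of_mem ((G.mem_neighborFinset u v).2 h)]
  exact card_le_card fun w hw =>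
    mem_erase.2 ⟨fun hwv => hv (hwv ▸ (mem_inter.1 hw).2), (mem_inter.1 hw).1⟩

theorem sub_mul_adjEvalOn_erase_le {D : ℕ} (hdeg : ∀ v, G.degree v ≤ D) {x : ℝ} (hx : 0 < x)
    {A : Finset V} {v : V} (hv : v ∈ A) (hvx : 2 * #(G.neighborFinset v ∩ A) ≤ x)
    (ih : ∀ A' ⊂ A, 0 < G.adjEvalOn A' x ∧ ∀ u ∈ A', #(G.neighborFinset u ∩ A') ≤ D - 1 →
      G.adjEvalOn (A'.erase u) x ≤ 2 / x * G.adjEvalOn A' x) :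
    (x - 2 * #(G.neighborFinset v ∩ A)) * G.adjEvalOn (A.erase v) x ≤ G.adjEvalOn A x := by
  set W := G.neighborFinset v ∩ A
  have hWr : #W * (2 / x) ≤ 1 := by
    rw [mul_div_assoc', div_le_one hx]
    linarith
  have hbound := (G.cliqueDeletionSum_bounds (x := x) W (A.erase v) hWr fun T _ => by
    have ihT := ih (A.erase v \ T) (sdiff_subset.trans_ssubset (erase_ssubset hv))
    refine ⟨ihT.1.le, fun u hu => ihT.2 u ?_ ?_⟩
    · obtain ⟨huW, huT⟩ := mem_sdiff.1 hu
      exact mem_sdiff.2 ⟨mem_erase.2 ⟨(G.ne_of_adj ((G.mem_neighborFinset v u).1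
        (inter_subset_left huW))).symm, inter_subset_right huW⟩, huT⟩
    · have hadj : G.Adj u v :=
        ((G.mem_neighborFinset v u).1 (inter_subset_left (mem_sdiff.1 hu).1)).symm
      exact (G.card_neighborFinset_inter_le_degree_sub_one hadj
        fun h => (mem_erase.1 (mem_sdiff.1 h).1).1 rfl).trans (Nat.sub_le_sub_right (hdeg u) 1)).1
  rw [adjEvalOn_eq_mul_cliqueDeletionSum G hv]
  calc (x - 2 * #W) * G.adjEvalOn (A.erase v) x
      = x * ((1 - #W * (2 / x)) * G.adjEvalOn (A.erase v) x) := by field_simp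
    _ ≤ x * G.cliqueDeletionSum (A.erase v) W x := by gcongr

theorem adjEvalOn_pos_and_erase_le {D : ℕ} (hD : 2 ≤ D) (hdeg : ∀ v, G.degree v ≤ D) {x : ℝ}
    (hx : 4 * ((D : ℝ) - 1) < x) (A : Finset V) :
    0 < G.adjEvalOn A x ∧ ∀ v ∈ A, #(G.neighborFinset v ∩ A) ≤ D - 1 →
      G.adjEvalOn (A.erase v) x ≤ 2 / x * G.adjEvalOn A x := by
  have hD' : (2 : ℝ) ≤ D := by exact_mod_cast hD
  have hx₀ : 0 < x := by linarith
  induction A using Finset.strongInduction with | H A ih => ?_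
  have hdegA (v : V) : (#(G.neighborFinset v ∩ A) : ℝ) ≤ D := by
    exact_mod_cast (card_le_card inter_subset_left).trans (hdeg v)
  have key (v : V) (hv : v ∈ A) :=
    G.sub_mul_adjEvalOn_erase_le hdeg hx₀ hv (by linarith [hdegA v]) ih
  refine ⟨?_, fun v hv hvD => ?_⟩
  · obtain rfl | ⟨v, hv⟩ := A.eq_empty_or_nonempty
    · simp [adjEvalOn_empty]
    have hfactor : 0 < x - 2 * #(G.neighborFinset v ∩ A) := by linarith [hdegA v]
    exact (mul_pos hfactor (ih _ (erase_ssubset hv)).1).trans_le (key v hv)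
  · have hvD' : (#(G.neighborFinset v ∩ A) : ℝ) ≤ D - 1 := by
      have : (#(G.neighborFinset v ∩ A) : ℝ) ≤ ((D - 1 : ℕ) : ℝ) := by exact_mod_cast hvD
      rwa [Nat.cast_sub (by omega), Nat.cast_one] at this
    have hpos := (ih _ (erase_ssubset hv)).1
    rw [div_mul_eq_mul_div, le_div_iff₀ hx₀]
    nlinarith [key v hv]

theorem numCliqueCovers_eq_card (k : ℕ) :
    numCliqueCovers G k =
      #{P : Finpartition (univ : Finset V) | G.IsCliquePartition P ∧ #P.parts = k} := by
  rw [numCliqueCovers, ← Set.ncard_coe_finset, coe_filter]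
  simp [IsCliqueCover, IsCliquePartition]

theorem eval_adjPoly (x : ℝ) : (adjPoly G).eval x = G.adjEvalOn univ x := by
  have hmaps : ∀ P ∈ ({P : Finpartition (univ : Finset V) | G.IsCliquePartition P} : Finset _),
      #P.parts ∈ range (Fintype.card V + 1) := fun P _ =>
    mem_range_succ_iff.2 (card_univ (α := V) ▸ P.card_parts_le_card)
  rw [adjEvalOn, ← sum_fiberwise_of_maps_to hmaps, adjPoly, eval_finsetSum, card_univ]
  refine sum_congr rfl fun k hk => ?_
  have hsign : (-1 : ℝ) ^ (Fintype.card V - k) = (-1) ^ (Fintype.card V + k) := by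
    rw [show Fintype.card V + k = Fintype.card V - k + 2 * k by
      have := mem_range.1 hk; omega, pow_add, pow_mul]
    norm_num
  rw [filter_filter, sum_congr rfl fun P hP => by rw [(mem_filter.1 hP).2.2], sum_const,
    ← numCliqueCovers_eq_card, nsmul_eq_mul, hsign, eval_mul, eval_C, eval_pow, eval_X]
  ring

end SimpleGraph

theorem stmt16_general {V : Type*} [Fintype V] [DecidableEq V] (G : SimpleGraph V)
    [DecidableRel G.Adj] (hD : 2 ≤ G.maxDegree) (g : ℝ) (hg : IsGammaZero (adjPoly G) g) :
    g ≤ 4 * ((G.maxDegree : ℝ) - 1) := by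
  by_contra! hlt
  have hpos := (G.adjEvalOn_pos_and_erase_le hD G.degree_le_maxDegree hlt univ).1
  rw [← G.eval_adjPoly, hg.1] at hpos
  exact hpos.false

/-- for connected `G` with at least one edge and maximum degree `Δ ≥ 2`,
the largest real zero of the adjoint polynomial satisfies `γ(G) ≤ 4(Δ - 1)`. -/
theorem stmt16 {V : Type*} [Fintype V] [DecidableEq V] (G : SimpleGraph V)
    [DecidableRel G.Adj] (hc : G.Connected) (he : ∃ a b, G.Adj a b)
    (hD : 2 ≤ G.maxDegree) (g : ℝ) (hg : IsGammaZero (adjPoly G) g) :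
    g ≤ 4 * ((G.maxDegree : ℝ) - 1) :=
  stmt16_general G hD g hg
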